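/- Let α > 0. Then ∑_{k=1}^∞ ∏_{i=0}^{k-1} α/(α + 1/(i+1)) equals Γ(1 + 1/α) ∑_{k=1}^∞ Γ(k+1)/Γ(k + 1 + 1/α); this sum equals α/(1-α) if α < 1 and diverges to infinity if α ≥ 1. -/

import Mathlib

/-!
Writing `β = 1/α`, the `k`-th factor is `(1 + i) / (1 + β + i)`, so the product telescopes into a
ratio of Gamma functions. The partial sums satisfy
`(β - 1) * ∑_{k<n} p k = β - (n + β) * p n`, where `p n` is the product of the first `n` factors.
For `β > 1` the quantity `(n + β) * p n` decreases to some `L ≥ 0`; then `p n ≥ L / (n + β)`,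
and comparison with the harmonic series forces `L = 0`. For `β ≤ 1` the factors dominate
`(1 + i) / (2 + i)`, so `p n ≥ 1 / (n + 1)` and the series diverges.
-/

open Finset Filter Topology

lemma Real.Gamma_add_nat_eq_mul_prod {s : ℝ} (hs : ∀ n : ℕ, s + n ≠ 0) (n : ℕ) :
    Real.Gamma (s + n) = Real.Gamma s * ∏ i ∈ range n, (s + i) := by
  induction n with
  | zero => simp
  | succ n ih =>
    rw [prod_range_succ, ← mul_assoc, ← ih, Nat.cast_succ, ← add_assoc,
      Real.Gamma_add_one (hs n), mul_comm]

lemma not_summable_of_div_add_le {f : ℕ → ℝ} {c d : ℝ} (hc : 0 < c) (hd : 0 ≤ d)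
    (hf : ∀ n : ℕ, c / (n + d) ≤ f n) : ¬Summable f := by
  intro hsum
  have harmonic : Summable fun n : ℕ => 1 / |(n : ℝ) + d| ^ (1 : ℝ) := by
    refine (summable_mul_left_iff hc.ne').mp
      ((hsum.of_nonneg_of_le (fun n => by positivity) hf).congr fun n => ?_)
    rw [Real.rpow_one, abs_of_nonneg (by positivity)]
    ring
  exact lt_irrefl _ ((Real.summable_one_div_nat_add_rpow d 1).mp harmonic)

noncomputable def ratioProd (β : ℝ) (k : ℕ) : ℝ :=
  ∏ i ∈ range k, (1 + i) / (1 + β + i)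

namespace ratioProd

variable {β : ℝ}

lemma succ (k : ℕ) : ratioProd β (k + 1) = ratioProd β k * ((1 + k) / (1 + β + k)) :=
  prod_range_succ _ _

lemma pos (hβ : 0 ≤ β) (k : ℕ) : 0 < ratioProd β k :=
  prod_pos fun i _ => by positivity

lemma eq_Gamma (hβ : 0 ≤ β) (k : ℕ) :
    ratioProd β k = Real.Gamma (1 + β) * (Real.Gamma (1 + k) / Real.Gamma (1 + β + k)) := by
  have hΓ : Real.Gamma (1 + β) ≠ 0 := (Real.Gamma_pos_of_pos (by positivity)).ne'
  rw [Real.Gamma_add_nat_eq_mul_prod (fun n => by positivity),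
    Real.Gamma_add_nat_eq_mul_prod (fun n => by positivity), Real.Gamma_one, one_mul,
    ← mul_div_assoc, mul_div_mul_left _ _ hΓ, ratioProd, prod_div_distrib]

lemma sub_one_mul_sum (hβ : 0 ≤ β) (n : ℕ) :
    (β - 1) * ∑ k ∈ range n, ratioProd β k = β - (n + β) * ratioProd β n := by
  induction n with
  | zero => simp [ratioProd]
  | succ n ih =>
    have : (1 : ℝ) + β + n ≠ 0 := by positivity
    rw [sum_range_succ, mul_add, ih, succ]
    push_cast
    field_simp
    ring

theorem hasSum (hβ : 1 < β) : HasSum (ratioProd β) (β / (β - 1)) := by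
  have hβ0 : 0 ≤ β := by linarith
  set q : ℕ → ℝ := fun n => (n + β) * ratioProd β n with hq
  have hq_nonneg : ∀ n, 0 ≤ q n := fun n => by have := pos hβ0 n; positivity
  have hq_anti : Antitone q := antitone_nat_of_succ_le fun n => by
    have hstep : q (n + 1) = (n + 1) * ratioProd β n := by
      simp only [hq, succ]
      push_cast
      field_simp
      ring
    rw [hstep]
    exact mul_le_mul_of_nonneg_right (by linarith) (pos hβ0 n).le
  obtain ⟨L, hL⟩ : ∃ L, Tendsto q atTop (𝓝 L) :=
    ⟨_, tendsto_atTop_ciInf hq_anti ⟨0, Set.forall_mem_range.2 hq_nonneg⟩⟩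
  have hsum : HasSum (ratioProd β) ((β - L) / (β - 1)) := by
    refine (hasSum_iff_tendsto_nat_of_nonneg (fun n => (pos hβ0 n).le) _).2 ?_
    have hpartial : ∀ n, ∑ k ∈ range n, ratioProd β k = (β - q n) / (β - 1) := fun n => by
      rw [eq_div_iff (by linarith), mul_comm, sub_one_mul_sum hβ0]
    simp_rw [hpartial]
    exact (hL.const_sub β).div_const _
  have hL0 : L = 0 := by
    refine le_antisymm (not_lt.1 fun hLpos => ?_) (ge_of_tendsto' hL hq_nonneg)
    refine not_summable_of_div_add_le hLpos hβ0 (fun n => ?_) hsum.summable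
    rw [div_le_iff₀ (by positivity), mul_comm]
    exact hq_anti.le_of_tendsto hL n
  simpa [hL0] using hsum

lemma one_div_le (hβ0 : 0 ≤ β) (hβ1 : β ≤ 1) (n : ℕ) : 1 / (n + 1) ≤ ratioProd β n := by
  induction n with
  | zero => simp [ratioProd]
  | succ n ih =>
    calc (1 : ℝ) / ((n + 1 : ℕ) + 1) = 1 / (n + 1) * ((1 + n) / (1 + 1 + n)) := by
          push_cast
          field_simp
          ring
      _ ≤ ratioProd β (n + 1) := by
          rw [succ]
          exact mul_le_mul ih (by gcongr) (by positivity) (pos hβ0 n).le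

lemma not_summable (hβ0 : 0 ≤ β) (hβ1 : β ≤ 1) : ¬Summable (ratioProd β) :=
  not_summable_of_div_add_le one_pos zero_le_one (one_div_le hβ0 hβ1)

end ratioProd

lemma prod_div_add_one_div_eq_ratioProd {α : ℝ} (hα : 0 < α) (k : ℕ) :
    ∏ i ∈ range k, α / (α + 1 / ((i : ℝ) + 1)) = ratioProd (1 / α) k := by
  refine prod_congr rfl fun i _ => ?_
  field_simp
  ring

theorem stmt_14 (α : ℝ) (hα : 0 < α) :
    ((∑' k : ℕ, ∏ i ∈ Finset.range (k + 1), α / (α + 1 / ((i : ℝ) + 1))) =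
      Real.Gamma (1 + 1 / α) *
        ∑' k : ℕ, Real.Gamma ((k : ℝ) + 2) / Real.Gamma ((k : ℝ) + 2 + 1 / α)) ∧
    (α < 1 → HasSum (fun k : ℕ => ∏ i ∈ Finset.range (k + 1), α / (α + 1 / ((i : ℝ) + 1)))
      (α / (1 - α))) ∧
    (1 ≤ α → Filter.Tendsto
      (fun n : ℕ => ∑ k ∈ Finset.range n,
        ∏ i ∈ Finset.range (k + 1), α / (α + 1 / ((i : ℝ) + 1)))
      Filter.atTop Filter.atTop) := by
  have hβ0 : 0 ≤ 1 / α := by positivity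
  simp_rw [prod_div_add_one_div_eq_ratioProd hα]
  refine ⟨?_, fun h => ?_, fun h => ?_⟩
  · rw [← tsum_mul_left]
    refine tsum_congr fun k => ?_
    rw [ratioProd.eq_Gamma hβ0]
    push_cast
    ring_nf
  · have hβ : 1 < 1 / α := by rw [lt_div_iff₀ hα]; linarith
    have hval : α / (1 - α) = 1 / α / (1 / α - 1) - ∑ i ∈ range 1, ratioProd (1 / α) i := by
      have : 1 - α ≠ 0 := by linarith
      simp only [range_one, sum_singleton, ratioProd, range_zero, prod_empty]
      field_simp
      ring
    rw [hval]
    exact (hasSum_nat_add_iff' 1).2 (ratioProd.hasSum hβ)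
  · have hβ1 : 1 / α ≤ 1 := by rw [div_le_iff₀ hα]; linarith
    rw [← not_summable_iff_tendsto_nat_atTop_of_nonneg fun k => (ratioProd.pos hβ0 _).le,
      summable_nat_add_iff 1]
    exact ratioProd.not_summable hβ0 hβ1
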